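/- arXiv:2403.06468 — 2 statements merged into one kernel-verified Lean document; each statement's English description precedes it below -/
import Mathlib

section
/- Let R be a commutative ring with 1 and for each n ≥ 0 let u_n ∈ Λ_R be homogeneous of degree n with u_0 = 1. Then {u_n}_{n≥0} generates Λ_R as an R-algebra if and only if the Hall inner product ⟨u_n, p_n⟩ is a unit in R for every n ≥ 0. -/
open MvPolynomial

noncomputable section SymmetricFunctionCore

/-- The ring of symmetric functions over `R`, modeled as the polynomial ring
`R[h₁, h₂, …]` in the complete homogeneous symmetric functions. -/
abbrev SF (R : Type*) [CommRing R] := MvPolynomial ℕ+ R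

variable (R : Type*) [CommRing R]

/-- The complete homogeneous symmetric function `h n` (with `h 0 = 1`). -/
def hh (n : ℕ) : SF R := if h : 0 < n then X (⟨n, h⟩ : ℕ+) else 1

/-- `h_λ` for a multiset `s` of parts. -/
def hprod (s : Multiset ℕ) : SF R := (s.map (hh R)).prod

/-- `h_λ` for a partition `λ`. -/
def hOf {n : ℕ} (lam : n.Partition) : SF R := hprod R lam.parts

/-- A symmetric function is homogeneous of degree `n` when it is weighted homogeneous
for the weight assigning degree `i` to `hᵢ`. -/
def IsHomogSF (f : SF R) (n : ℕ) : Prop :=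
  IsWeightedHomogeneous (fun i : ℕ+ => (i : ℕ)) f n

/-- The power sum symmetric functions, defined from the `hᵢ` by Newton's identity
`p n = n * h n - ∑_{i=1}^{n-1} h (n - i) * p i`, with `p 0 = 1`. -/
def psum : ℕ → SF R
  | 0 => 1
  | (n+1) => (n + 1 : ℕ) • hh R (n + 1) -
      ∑ i ∈ (Finset.range n).attach, hh R (n - i) * psum (i + 1)
  termination_by n => n
  decreasing_by have := Finset.mem_range.mp i.2; omega

/-- `p_λ` for a multiset of parts. -/
def pprod (s : Multiset ℕ) : SF R := (s.map (psum R)).prod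

/-- The realization of an abstract symmetric function as an honest symmetric
polynomial in `k` variables, sending `h n` to the complete homogeneous polynomial. -/
def realize (k : ℕ) : SF R →ₐ[R] MvPolynomial (Fin k) R :=
  aeval fun n : ℕ+ => hsymm (Fin k) R (n : ℕ)

/-- The parts of a multiset, sorted in weakly decreasing order. -/
def sortedDesc (s : Multiset ℕ) : List ℕ := (s.sort (· ≤ ·)).reverse

/-- The exponent vector `x₁^{λ₁} ⋯` attached to a multiset of parts `s`, in `s.sum` variables. -/
def expOf (s : Multiset ℕ) : Fin s.sum →₀ ℕ :=
  Finsupp.equivFunOnFinite.symm fun j => (sortedDesc s).getD j 0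

/-- The coefficient of the monomial symmetric function `m_s` in a symmetric function `g`,
read off as the coefficient of the monomial `x^{s}` in a realization of `g` with
sufficiently many variables. -/
def mcoeff (s : Multiset ℕ) (g : SF R) : R :=
  coeff (expOf s) (realize R s.sum g)

/-- The multiset of parts attached to an exponent vector of a monomial in the `hᵢ`:
the monomial `∏ hᵢ^{dᵢ}` corresponds to the partition with `dᵢ` parts equal to `i`. -/
def partsOfExp (d : ℕ+ →₀ ℕ) : Multiset ℕ :=
  d.sum fun i m => Multiset.replicate m (i : ℕ)

/-- The Hall inner product on symmetric functions, determined by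
`⟨h_λ, m_μ⟩ = δ_{λμ}`: expand the first argument in the basis `h_λ` and pair with the
`m`-coefficients of the second argument. -/
def hallInner (f g : SF R) : R :=
  ∑ d ∈ f.support, f.coeff d * mcoeff R (partsOfExp d) g

variable (F : Type*) [Field F]

/-- The matrix `⟨h_λ, h_μ⟩` of the Hall pairing on the `h` basis in degree `n`. -/
def hmMatrix (n : ℕ) : Matrix (Nat.Partition n) (Nat.Partition n) F :=
  fun lam mu => mcoeff F lam.parts (hOf F mu)

/-- The monomial symmetric function `m_λ`, expanded in the `h` basis as the basis
dual to `{h_μ}` under the Hall inner product. -/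
def msym {n : ℕ} (lam : n.Partition) : SF F :=
  ∑ mu : Nat.Partition n, ((hmMatrix F n)⁻¹ lam mu) • hOf F mu


/-- `h_z` for an integer index: `0` for negative indices. -/
def hz (z : ℤ) : SF R := if 0 ≤ z then hh R z.toNat else 0

/-- The Schur function `s_λ`, defined by the Jacobi–Trudi formula
`s_λ = det (h_{λᵢ - i + j})`. -/
def schurOf {n : ℕ} (lam : n.Partition) : SF R :=
  Matrix.det (Matrix.of fun i j : Fin (sortedDesc lam.parts).length =>
    hz R (((sortedDesc lam.parts).getD i 0 : ℤ) - (i : ℤ) + (j : ℤ)))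

/-- A partition of `n` is a hook if it has the form `(a, 1^{n-a})` with `a ≥ 1`. -/
def IsHook {n : ℕ} (lam : n.Partition) : Prop :=
  ∃ a : ℕ, 1 ≤ a ∧ lam.parts = a ::ₘ Multiset.replicate (n - a) 1

/-- The sign `ε_λ = (-1)^{|λ| - ℓ(λ)}` of a permutation of cycle type `λ`. -/
def eps (s : Multiset ℕ) : ℤ := (-1) ^ (s.sum - s.card)

/-- `z_λ = ∏ᵢ i^{mᵢ} mᵢ!` where `mᵢ` is the multiplicity of `i` in `λ`. -/
def zee (s : Multiset ℕ) : ℕ :=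
  ∏ i ∈ s.toFinset, i ^ s.count i * (s.count i).factorial

/-- The total weight `w_{shape, type}` of domino tabloids of given shape and type: a
domino tabloid assigns to each row of the shape an ordered arrangement (a composition)
of dominoes filling that row, so that the multiset of all domino lengths is the type;
its weight is the product over the rows of the length of the leftmost domino. -/
def dominoW (shape ty : Multiset ℕ) : ℕ :=
  ∑ T ∈ Finset.univ.filter
      (fun T : ∀ i : Fin (sortedDesc shape).length,
          Composition ((sortedDesc shape).get i) =>
        (∑ i, ((T i).blocks : Multiset ℕ)) = ty),
    ∏ i, (T i).blocks.headI

/-- The elementary symmetric functions, defined from the `hᵢ` by the identity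
`∑_{i=0}^{n} (-1)^i e_i h_{n-i} = 0` for `n ≥ 1`. -/
def ee : ℕ → SF R
  | 0 => 1
  | (n+1) => (-1 : SF R) ^ (n + 2) *
      ∑ i ∈ (Finset.range (n + 1)).attach, (-1 : SF R) ^ (i : ℕ) * ee i * hh R (n + 1 - i)
  termination_by n => n
  decreasing_by have := Finset.mem_range.mp i.2; omega

/-- `e_λ` for a multiset of parts. -/
def eprod (s : Multiset ℕ) : SF R := (s.map (ee R)).prod

variable {F} in
/-- The skew complete homogeneous symmetric function `h_{λ/μ}`, characterized by
`⟨h_{λ/μ}, f⟩ = ⟨h_λ, h_μ f⟩`; its expansion in the `h` basis is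
`h_{λ/μ} = ∑_{ν ⊢ n} ⟨h_λ, h_μ m_ν⟩ h_ν`. -/
def hskew {m n : ℕ} (lam : Nat.Partition (m + n)) (mu : Nat.Partition m) : SF F :=
  ∑ nu : Nat.Partition n, hallInner F (hOf F lam) (hOf F mu * msym F nu) • hOf F nu

variable {F} in
/-- The skew elementary symmetric function `e_{λ/μ}`, characterized by
`⟨e_{λ/μ}, f⟩ = ⟨e_λ, e_μ f⟩`. -/
def eskew {m n : ℕ} (lam : Nat.Partition (m + n)) (mu : Nat.Partition m) : SF F :=
  ∑ nu : Nat.Partition n,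
    hallInner F (eprod F lam.parts) (eprod F mu.parts * msym F nu) • hOf F nu

variable {F} in
/-- The skew Schur function `s_{λ/μ}`, characterized by `⟨s_{λ/μ}, f⟩ = ⟨s_λ, s_μ f⟩`. -/
def sskew {m n : ℕ} (lam : Nat.Partition (m + n)) (mu : Nat.Partition m) : SF F :=
  ∑ nu : Nat.Partition n,
    hallInner F (schurOf F lam) (schurOf F mu * msym F nu) • hOf F nu

/-- The `i`-th part (`0`-indexed) of a partition, `0` if `i` exceeds the length. -/
def rowOf {n : ℕ} (lam : n.Partition) (i : ℕ) : ℕ := (sortedDesc lam.parts).getD i 0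

/-- The set of cells of the skew diagram `λ/μ`. -/
def skewCells {m n : ℕ} (lam : Nat.Partition (m + n)) (mu : Nat.Partition m) :
    Set (ℕ × ℕ) :=
  {c | rowOf mu c.1 ≤ c.2 ∧ c.2 < rowOf lam c.1}

/-- Two cells are adjacent when they share an edge. -/
def CellAdj (c c' : ℕ × ℕ) : Prop :=
  (c.1 = c'.1 ∧ (c.2 = c'.2 + 1 ∨ c'.2 = c.2 + 1)) ∨
  (c.2 = c'.2 ∧ (c.1 = c'.1 + 1 ∨ c'.1 = c.1 + 1))

/-- `λ/μ` is a ribbon (border strip): `μ ⊆ λ`, the skew diagram is nonempty,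
edgewise connected, and contains no `2 × 2` block of cells. -/
def IsRibbon {m n : ℕ} (lam : Nat.Partition (m + n)) (mu : Nat.Partition m) : Prop :=
  (∀ i, rowOf mu i ≤ rowOf lam i) ∧
  (skewCells lam mu).Nonempty ∧
  (∀ c ∈ skewCells lam mu, ∀ c' ∈ skewCells lam mu,
    Relation.ReflTransGen (fun a b => CellAdj a b ∧ b ∈ skewCells lam mu) c c') ∧
  ¬∃ i j : ℕ, (i, j) ∈ skewCells lam mu ∧ (i + 1, j) ∈ skewCells lam mu ∧
      (i, j + 1) ∈ skewCells lam mu ∧ (i + 1, j + 1) ∈ skewCells lam mu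

variable {F} in
/-- The algebra endomorphism of `Λ` sending `p_k ↦ p_k / (1 - t^k)`, written on the
generators `h_n = ∑_{λ ⊢ n} z_λ⁻¹ p_λ`. -/
def thetaT (t : F) : SF F →ₐ[F] SF F :=
  aeval fun i : ℕ+ =>
    ∑ lam : Nat.Partition (i : ℕ),
      ((zee lam.parts : F)⁻¹ * (lam.parts.map fun a => (1 - t ^ a)⁻¹).prod) •
        pprod F lam.parts

variable {F} in
/-- The `t`-deformed Hall inner product, `⟨p_λ, p_μ⟩_t = δ_{λμ} z_λ ∏ᵢ (1 - t^{λᵢ})⁻¹`,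
expressed via the ordinary Hall product as `⟨f, g⟩_t = ⟨Θ_t f, g⟩`. -/
def hallT (t : F) (f g : SF F) : F := hallInner F (thetaT t f) g

/-- `μ` is dominated by `λ`: partial sums of `μ` are at most those of `λ`. -/
def Dominated {n : ℕ} (mu lam : n.Partition) : Prop :=
  ∀ k : ℕ, ((sortedDesc mu.parts).take k).sum ≤ ((sortedDesc lam.parts).take k).sum

/-- `n(λ) = ∑ᵢ (i - 1) λᵢ`. -/
def nInv (s : Multiset ℕ) : ℕ :=
  ∑ i ∈ Finset.range (sortedDesc s).length, i * (sortedDesc s).getD i 0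

variable {F} in
/-- `φ_r(t) = (1 - t)(1 - t²) ⋯ (1 - t^r)`. -/
def phi (r : ℕ) (t : F) : F := ∏ j ∈ Finset.range r, (1 - t ^ (j + 1))

variable {F} in
open scoped Classical in
/-- A family `P` of symmetric functions indexed by partitions is the family of
Hall–Littlewood symmetric functions `P_λ(x; t)` if each `P_λ` is `m_λ` plus a linear
combination of `m_μ` for `μ` strictly dominated by `λ`, and distinct members are
orthogonal for the `t`-inner product. -/
def IsHallLittlewoodP (t : F) (P : ∀ n : ℕ, Nat.Partition n → SF F) : Prop :=
  (∀ n (lam : Nat.Partition n), ∃ c : Nat.Partition n → F,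
    P n lam = msym F lam +
      ∑ mu ∈ Finset.univ.filter fun mu => mu ≠ lam ∧ Dominated mu lam,
        c mu • msym F mu) ∧
  ∀ n (lam mu : Nat.Partition n), lam ≠ mu → hallT t (P n lam) (P n mu) = 0

variable {F} in
/-- The `Q`-Hall–Littlewood function `Q_λ = (∏ᵢ φ_{mᵢ(λ)}(t)) P_λ`. -/
def QofP (t : F) (P : ∀ n : ℕ, Nat.Partition n → SF F) {n : ℕ}
    (lam : Nat.Partition n) : SF F :=
  (∏ i ∈ lam.parts.toFinset, phi (lam.parts.count i) t) • P n lam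

end SymmetricFunctionCore

/-!
For `f` homogeneous of degree `n ≥ 1`, `⟨f, p_n⟩` is the coefficient of `h_n` in `f`: realized in
`n` variables, `p_n = ∑ xᵢⁿ`, whose only monomial of the form `x^λ` with `λ ⊢ n` is `x₁ⁿ`. So the
condition says `u_n = c_n h_n + (a polynomial in h_1, …, h_{n-1})` with `c_n` a unit, and the
`h_n` lie in the algebra generated by the `u_n` by induction on `n`. Conversely, the algebra map
to the dual numbers over `R ⧸ (c_n)` with `h_n ↦ ε` and `h_m ↦ 0` for `m ≠ n` sends every `u_m`
to a scalar; if the `u_m` generate, then so is `ε`, which forces `R ⧸ (c_n) = 0`.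
-/

namespace MvPolynomial

section Newton

open Finset

variable {σ R : Type*} [Fintype σ] [DecidableEq σ] [CommSemiring R]

theorem X_pow_mul_hsymm (x : σ) {j N : ℕ} (hj : j ≤ N) :
    X x ^ j * hsymm σ R (N - j) =
      ∑ μ : Sym σ N, if j ≤ (μ : Multiset σ).count x then ((μ : Multiset σ).map X).prod else 0 := by
  rw [← sum_filter, hsymm, mul_sum]
  have hle : ∀ μ ∈ ({μ | j ≤ (μ : Multiset σ).count x} : Finset (Sym σ N)),
      Multiset.replicate j x ≤ μ := fun μ hμ =>
    Multiset.le_count_iff_replicate_le.mp (mem_filter.mp hμ).2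
  refine sum_bij' (fun ν _ => Sym.mk (Multiset.replicate j x + ν) (by simp; omega))
    (fun μ hμ => Sym.mk ((μ : Multiset σ) - Multiset.replicate j x) (by
      rw [Multiset.card_sub (hle μ hμ)]; simp)) ?_ ?_ ?_ ?_ ?_
  · intro ν _
    simp [Multiset.count_replicate_self]
  · intro μ _
    simp
  · intro ν _
    apply Sym.coe_injective
    simp
  · intro μ hμ
    apply Sym.coe_injective
    simpa using add_tsub_cancel_of_le (hle μ hμ)
  · intro ν _
    simp [Multiset.map_replicate]

theorem sum_hsymm_mul_psum (N : ℕ) :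
    ∑ i ∈ range N, hsymm σ R (N - (i + 1)) * psum σ R (i + 1) = N • hsymm σ R N := by
  -- `x^μ` occurs in `X x ^ (i + 1) * h_{N-(i+1)}` exactly when `i < μ.count x`
  have hcount (μ : Sym σ N) :
      ∑ x : σ, ∑ i ∈ range N, (if i + 1 ≤ (μ : Multiset σ).count x then 1 else 0) = N := by
    have (x : σ) : #{i ∈ range N | i + 1 ≤ (μ : Multiset σ).count x} =
        (μ : Multiset σ).count x := by
      rw [show {i ∈ range N | i + 1 ≤ (μ : Multiset σ).count x} =
          range ((μ : Multiset σ).count x) by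
        ext i
        have := (Multiset.count_le_card x (μ : Multiset σ)).trans_eq μ.2
        simp only [mem_filter, mem_range]
        omega, card_range]
    simp only [sum_boole, this, Nat.cast_id]
    rw [Multiset.sum_count_eq_card (fun a _ => mem_univ a), Sym.card_coe]
  calc ∑ i ∈ range N, hsymm σ R (N - (i + 1)) * psum σ R (i + 1)
      = ∑ x : σ, ∑ i ∈ range N, X x ^ (i + 1) * hsymm σ R (N - (i + 1)) := by
        simp only [mul_comm (hsymm _ _ _), psum, sum_mul]
        rw [sum_comm]
    _ = ∑ x : σ, ∑ μ : Sym σ N, ∑ i ∈ range N,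
          if i + 1 ≤ (μ : Multiset σ).count x then ((μ : Multiset σ).map X).prod else 0 := by
        refine sum_congr rfl fun x _ => ?_
        rw [sum_congr rfl fun i hi => X_pow_mul_hsymm x (mem_range.mp hi)]
        rw [sum_comm]
    _ = N • hsymm σ R N := by
        rw [sum_comm,
          show hsymm σ R N = ∑ μ : Sym σ N, ((μ : Multiset σ).map X).prod from rfl, smul_sum]
        refine sum_congr rfl fun μ _ => ?_
        simpa only [sum_smul, ite_smul, one_smul, zero_smul] using
          congrArg (· • ((μ : Multiset σ).map (X : σ → MvPolynomial σ R)).prod) (hcount μ)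

end Newton

theorem aeval_piSingle_of_mul_self_eq_zero {σ R A : Type*} [DecidableEq σ]
    [CommSemiring R] [CommSemiring A] [Algebra R A] (i : σ) {a : A} (ha : a * a = 0)
    (f : MvPolynomial σ R) :
    aeval (Pi.single i a) f =
      algebraMap R A (constantCoeff f) + coeff (Finsupp.single i 1) f • a := by
  induction f using MvPolynomial.induction_on with
  | C r => simp [coeff_C, (Finsupp.single_ne_zero.mpr one_ne_zero).symm]
  | add p q hp hq => simp only [map_add, coeff_add, hp, hq, add_smul]; abel
  | mul_X p j hp =>
    rw [map_mul, aeval_X, hp, map_mul, constantCoeff_X, mul_zero, map_zero, zero_add, coeff_mul_X']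
    by_cases hj : j = i
    · subst hj
      simp only [Algebra.smul_def, Pi.single_eq_same, add_mul, mul_assoc, ha, mul_zero, add_zero,
        Finsupp.support_single _ one_ne_zero, Finset.mem_singleton, if_true, tsub_self]
      rfl
    · simp [hj]

end MvPolynomial

theorem Finsupp.eq_single_one_of_weight_eq {σ : Type*} {w : σ → ℕ} (hw : ∀ i, w i ≠ 0)
    {d : σ →₀ ℕ} {j : σ} (hj : d j ≠ 0) (h : Finsupp.weight w d = w j) :
    d = Finsupp.single j 1 := by
  have : NonTorsionWeight ℕ w := nonTorsionWeight_of ℕ w hw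
  have hrest : Finsupp.weight w (d - Finsupp.single j 1) = 0 := by
    have := Finsupp.weight_sub_single_add (w := w) hj
    omega
  rw [Finsupp.weight_eq_zero_iff_eq_zero] at hrest
  rw [← Finsupp.sub_add_single_one_cancel hj, hrest, zero_add]

theorem Multiset.eq_singleton_of_mem_of_sum_eq {s : Multiset ℕ} {n : ℕ} (hpos : ∀ a ∈ s, 0 < a)
    (hn : n ∈ s) (hs : s.sum = n) : s = {n} := by
  obtain ⟨t, rfl⟩ := Multiset.exists_cons_of_mem hn
  have ht : t.sum = 0 := by simpa using hs
  rw [Multiset.sum_eq_zero_iff] at ht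
  rw [Multiset.eq_zero_of_forall_notMem fun a ha =>
    (hpos a (Multiset.mem_cons_of_mem ha)).ne' (ht a ha)]
  rfl

section HallInnerPowerSum

variable {R : Type*} [CommRing R]

theorem realize_hh (k n : ℕ) : realize R k (hh R n) = hsymm (Fin k) R n := by
  unfold hh
  split_ifs with hn
  · exact aeval_X _ _
  · simp [show n = 0 by omega, hsymm_zero]

theorem realize_psum (k : ℕ) {n : ℕ} (hn : 0 < n) :
    realize R k (psum R n) = MvPolynomial.psum (Fin k) R n := by
  induction n using Nat.strong_induction_on with
  | _ n ih =>
    obtain ⟨m, rfl⟩ := Nat.exists_eq_add_of_lt hn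
    rw [zero_add, _root_.psum, map_sub, map_nsmul, map_sum, realize_hh,
      ← sum_hsymm_mul_psum (m + 1), Finset.sum_range_succ, ← Finset.sum_attach (Finset.range m)]
    have hterm : ∀ i ∈ (Finset.range m).attach,
        realize R k (hh R (m - i) * _root_.psum R (i + 1)) =
          hsymm (Fin k) R (m + 1 - (i + 1)) * MvPolynomial.psum (Fin k) R (i + 1) := fun i _ => by
      rw [map_mul, realize_hh, ih _ (by have := Finset.mem_range.mp i.2; omega) (Nat.succ_pos _),
        Nat.add_sub_add_right]
    rw [Finset.sum_congr rfl hterm, Nat.sub_self, hsymm_zero, one_mul, add_sub_cancel_left]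

theorem expOf_apply (s : Multiset ℕ) (j : Fin s.sum) : expOf s j = (sortedDesc s).getD j 0 :=
  rfl

theorem expOf_singleton {n : ℕ} (hn : 0 < n) :
    expOf {n} = Finsupp.single (⟨0, by simpa using hn⟩ : Fin ({n} : Multiset ℕ).sum) n := by
  ext j
  rw [expOf_apply, Finsupp.single_apply]
  rcases j with ⟨_ | k, hk⟩ <;> simp [sortedDesc]

theorem mem_of_single_eq_expOf {s : Multiset ℕ} {i : Fin s.sum} {n : ℕ} (hn : n ≠ 0)
    (h : Finsupp.single i n = expOf s) : n ∈ s := by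
  have hi := DFunLike.congr_fun h i
  rw [Finsupp.single_eq_same, expOf_apply] at hi
  have hlen : (i : ℕ) < (sortedDesc s).length := by
    by_contra hlen
    exact hn (hi.trans (List.getD_eq_default _ _ (not_lt.mp hlen)))
  rw [List.getD_eq_getElem _ _ hlen] at hi
  have := List.getElem_mem hlen
  rw [← hi] at this
  simpa [sortedDesc] using this

theorem mcoeff_psum {s : Multiset ℕ} {n : ℕ} (hn : 0 < n) (hpos : ∀ a ∈ s, 0 < a)
    (hs : s.sum = n) : mcoeff R s (psum R n) = if s = {n} then 1 else 0 := by
  rw [mcoeff, realize_psum _ hn, MvPolynomial.psum, coeff_sum]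
  simp only [coeff_X_pow]
  split_ifs with h
  · subst h
    simp_rw [expOf_singleton hn, Finsupp.single_left_inj hn.ne']
    simp
  · exact Finset.sum_eq_zero fun i _ => if_neg fun hi =>
      h (Multiset.eq_singleton_of_mem_of_sum_eq hpos (mem_of_single_eq_expOf hn.ne' hi) hs)

theorem partsOfExp_eq_map_toMultiset (d : ℕ+ →₀ ℕ) :
    partsOfExp d = (Finsupp.toMultiset d).map (↑) := by
  rw [Finsupp.toMultiset_map, Finsupp.toMultiset_apply,
    Finsupp.sum_mapDomain_index (by simp) (by simp [add_nsmul])]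
  simp only [partsOfExp, Multiset.nsmul_singleton]

theorem sum_partsOfExp (d : ℕ+ →₀ ℕ) :
    (partsOfExp d).sum = Finsupp.weight (fun i : ℕ+ => (i : ℕ)) d := by
  rw [partsOfExp_eq_map_toMultiset, Finsupp.toMultiset_map, Finsupp.sum_toMultiset,
    Finsupp.sum_mapDomain_index (by simp) (by simp [add_mul]), Finsupp.weight_apply]

theorem pos_of_mem_partsOfExp {d : ℕ+ →₀ ℕ} {a : ℕ} (ha : a ∈ partsOfExp d) : 0 < a := by
  rw [partsOfExp_eq_map_toMultiset, Multiset.mem_map] at ha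
  obtain ⟨i, -, rfl⟩ := ha
  exact i.pos

theorem partsOfExp_eq_singleton_iff (d : ℕ+ →₀ ℕ) (i : ℕ+) :
    partsOfExp d = {(i : ℕ)} ↔ d = Finsupp.single i 1 := by
  rw [partsOfExp_eq_map_toMultiset, ← Multiset.map_singleton,
    (Multiset.map_injective PNat.coe_injective).eq_iff,
    Finsupp.toMultiset_eq_iff, Multiset.toFinsupp_singleton]

theorem hallInner_psum {f : SF R} {i : ℕ+} (hf : IsHomogSF R f i) :
    hallInner R f (psum R i) = coeff (Finsupp.single i 1) f := by
  have hterm : ∀ d ∈ f.support, coeff d f * mcoeff R (partsOfExp d) (psum R i) =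
      if d = Finsupp.single i 1 then coeff d f else 0 := fun d hd => by
    rw [mcoeff_psum i.pos (fun _ => pos_of_mem_partsOfExp)
      ((sum_partsOfExp d).trans (hf (mem_support_iff.mp hd)))]
    simp only [partsOfExp_eq_singleton_iff, mul_ite, mul_one, mul_zero]
  rw [hallInner, Finset.sum_congr rfl hterm, Finset.sum_ite_eq']
  split_ifs with h
  · rfl
  · exact (notMem_support_iff.mp h).symm

theorem hallInner_one_one : hallInner R 1 1 = 1 := by
  have hexp : expOf 0 = 0 := Finsupp.ext fun j => absurd j.2 (by simp)
  rw [hallInner, Finset.sum_eq_single 0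
      (fun d _ hd => by rw [coeff_one, if_neg (Ne.symm hd), zero_mul])
      (fun h => by rw [notMem_support_iff.mp h, zero_mul]),
    mcoeff, coeff_one, if_pos rfl, one_mul, map_one, partsOfExp, Finsupp.sum_zero_index, hexp,
    coeff_zero_one]

end HallInnerPowerSum

section Generation

variable {R : Type*} [CommRing R]

theorem coeff_single_eq_zero_of_ne {f : SF R} {n : ℕ} (hf : IsHomogSF R f n) {i : ℕ+}
    (hi : (i : ℕ) ≠ n) : coeff (Finsupp.single i 1) f = 0 := by
  by_contra h
  exact hi (by simpa [Finsupp.weight_single] using hf h)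

theorem sub_coeff_smul_X_mem_supported {f : SF R} {i : ℕ+} (hf : IsHomogSF R f i) :
    f - coeff (Finsupp.single i 1) f • X i ∈ supported R {j | j < i} := by
  rw [mem_supported]
  intro j hj
  obtain ⟨d, hd, hjd⟩ := (mem_vars_iff_mem_support j).mp hj
  rw [mem_support_iff, coeff_sub, coeff_smul, coeff_X, smul_eq_mul] at hd
  have hdi : d ≠ Finsupp.single i 1 := by
    rintro rfl
    simp at hd
  rw [if_neg (Ne.symm hdi), mul_zero, sub_zero] at hd
  have hw := hf hd
  have hjd' : d j ≠ 0 := Finsupp.mem_support_iff.mp hjd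
  have hle : (j : ℕ) ≤ i := (Finsupp.le_weight_of_ne_zero' _ hjd').trans_eq hw
  refine lt_of_le_of_ne (show j ≤ i from hle) fun hji => hdi ?_
  subst hji
  exact Finsupp.eq_single_one_of_weight_eq (fun k => k.ne_zero) hjd' hw

theorem X_mem_adjoin_of_isUnit_coeff {u : ℕ → SF R} (hhom : ∀ n, IsHomogSF R (u n) n)
    (hunit : ∀ i : ℕ+, IsUnit (coeff (Finsupp.single i 1) (u i))) (i : ℕ+) :
    X i ∈ Algebra.adjoin R (Set.range u) := by
  induction i using PNat.strongInductionOn with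
  | _ i ih =>
    have hlow : supported R {j | j < i} ≤ Algebra.adjoin R (Set.range u) := by
      rw [supported_eq_adjoin_X]
      exact Algebra.adjoin_le (by rintro _ ⟨j, hj, rfl⟩; exact ih j hj)
    have hcX : coeff (Finsupp.single i 1) (u i) • X i ∈ Algebra.adjoin R (Set.range u) := by
      simpa using Subalgebra.sub_mem _ (Algebra.subset_adjoin (Set.mem_range_self (i : ℕ)))
        (hlow (sub_coeff_smul_X_mem_supported (hhom i)))
    obtain ⟨v, hv⟩ := hunit i
    simpa [← hv, smul_smul] using Subalgebra.smul_mem _ hcX (↑v⁻¹ : R)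

theorem isUnit_coeff_of_adjoin_eq_top {u : ℕ → SF R} (hhom : ∀ n, IsHomogSF R (u n) n)
    (h : Algebra.adjoin R (Set.range u) = ⊤) (i : ℕ+) :
    IsUnit (coeff (Finsupp.single i 1) (u i)) := by
  set c := coeff (Finsupp.single i 1) (u i)
  let ψ : SF R →ₐ[R] DualNumber (R ⧸ Ideal.span {c}) := aeval (Pi.single i DualNumber.eps)
  have hψ (f : SF R) := aeval_piSingle_of_mul_self_eq_zero i
    (DualNumber.eps_mul_eps (R := R ⧸ Ideal.span {c})) f
  have hu (m : ℕ) : ψ (u m) ∈ (⊥ : Subalgebra R (DualNumber (R ⧸ Ideal.span {c}))) := by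
    have hε : coeff (Finsupp.single i 1) (u m) •
        (DualNumber.eps : DualNumber (R ⧸ Ideal.span {c})) = 0 := by
      by_cases hm : (i : ℕ) = m
      · subst hm
        rw [← algebraMap_smul (R ⧸ Ideal.span {c}), Ideal.Quotient.algebraMap_eq,
          Ideal.Quotient.eq_zero_iff_mem.mpr (Ideal.mem_span_singleton_self c), zero_smul]
      · rw [coeff_single_eq_zero_of_ne (hhom m) hm, zero_smul]
    rw [hψ, hε, add_zero]
    exact Subalgebra.algebraMap_mem _ _
  have hle : Algebra.adjoin R (Set.range u) ≤ (⊥ : Subalgebra R _).comap ψ :=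
    Algebra.adjoin_le (Set.range_subset_iff.mpr hu)
  obtain ⟨r, hr⟩ := Algebra.mem_bot.mp (hle (h ▸ Algebra.mem_top : X i ∈ Algebra.adjoin R _))
  have h01 : (0 : R ⧸ Ideal.span {c}) = 1 := by
    simpa [ψ, TrivSqZeroExt.algebraMap_eq_inl'] using congrArg TrivSqZeroExt.snd hr
  rwa [Ideal.Quotient.zero_eq_one_iff, Ideal.span_singleton_eq_top] at h01

end Generation

/-- For `u n` homogeneous of degree `n` with `u 0 = 1`, the family
`{u n}` generates `Λ_R` as an `R`-algebra iff `⟨u n, p n⟩` is a unit in `R` for all `n`. -/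
theorem stmt2 (R : Type*) [CommRing R] (u : ℕ → SF R) (hu0 : u 0 = 1)
    (hhom : ∀ n, IsHomogSF R (u n) n) :
    Algebra.adjoin R (Set.range u) = ⊤ ↔
      ∀ n : ℕ, IsUnit (hallInner R (u n) (psum R n)) := by
  have key (i : ℕ+) : hallInner R (u i) (psum R i) = coeff (Finsupp.single i 1) (u i) :=
    hallInner_psum (hhom i)
  refine ⟨fun h n => ?_, fun h => ?_⟩
  · rcases n.eq_zero_or_pos with rfl | hn
    · rw [hu0, _root_.psum, hallInner_one_one]
      exact isUnit_one
    · lift n to ℕ+ using hn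
      exact key n ▸ isUnit_coeff_of_adjoin_eq_top hhom h n
  · rw [eq_top_iff, ← adjoin_range_X]
    exact Algebra.adjoin_le <| Set.range_subset_iff.mpr <|
      X_mem_adjoin_of_isUnit_coeff hhom fun i => key i ▸ h i
end

section
/- Let λ be a non-rectangular partition of n (i.e., λ is not of the form (a^b)). Then the weighted count of domino tabloids w_{(n)λ} of shape (n) and type λ satisfies w_{(n)λ} ≥ n. -/
open MvPolynomial

/-!
A domino tabloid of shape `(n)` is a composition of `n`. The cyclic rotations of the parts
`λ₁ ≥ ⋯ ≥ λ_ℓ` of `λ` are such compositions of type `λ`, and the `k`-th one starts with the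
domino `λ_k`, so together they weigh `λ₁ + ⋯ + λ_ℓ = n`. They are pairwise distinct because
`λ` is not rectangular: a weakly decreasing list fixed by a nontrivial rotation is constant.
-/

namespace List

variable {α : Type*}

theorem headI_rotate [Inhabited α] {l : List α} {k : ℕ} (hk : k < l.length) :
    (l.rotate k).headI = l[k] := by
  rw [← getI_zero_eq_headI, getI_eq_getElem _ (by simpa using Nat.zero_lt_of_lt hk)]
  simp only [getElem_rotate, Nat.zero_add, Nat.mod_eq_of_lt hk]

variable [LinearOrder α]

/-- The largest entry `l[0]` reappears at position `d` and the smallest `l[l.length - 1]`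
at position `d - 1`, just before it, so the largest entry is at most the smallest. -/
theorem SortedGE.eq_replicate_of_rotate_eq_self {l : List α} (hl : l.SortedGE) {d : ℕ}
    (hd₀ : 0 < d) (hd : d < l.length) (h : l.rotate d = l) :
    ∃ a, l = replicate l.length a := by
  have hl₀ : 0 < l.length := Nat.zero_lt_of_lt hd
  have hanti := sortedGE_iff_getElem_ge_getElem_of_le.1 hl
  have hfirst : l[0] = l[d] := by
    simp only [getElem_of_eq h.symm hl₀, getElem_rotate, Nat.zero_add, Nat.mod_eq_of_lt hd]
  have hlast : l[l.length - 1] = l[d - 1] := by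
    rw [getElem_of_eq h.symm (Nat.sub_lt hl₀ Nat.one_pos)]
    simp only [getElem_rotate]
    congr 1
    rw [Nat.mod_eq_sub_mod (by omega), Nat.mod_eq_of_lt (by omega)]
    omega
  refine ⟨l[0], ext_getElem (by simp) fun i hi _ => ?_⟩
  rw [getElem_replicate]
  refine le_antisymm (hanti (Nat.zero_le i)) ?_
  calc l[0] = l[d] := hfirst
    _ ≤ l[d - 1] := hanti (Nat.sub_le d 1)
    _ = l[l.length - 1] := hlast.symm
    _ ≤ l[i] := hanti (by omega)

theorem SortedGE.injOn_rotate {l : List α} (hl : l.SortedGE)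
    (hne : ¬∃ a, l = replicate l.length a) : Set.InjOn l.rotate (Set.Iio l.length) := by
  intro k hk m hm h
  by_contra hkm
  wlog hlt : k < m generalizing k m
  · exact this hm hk h.symm (Ne.symm hkm) (by omega)
  have hperiod : l.rotate (m - k) = l :=
    (rotate_eq_rotate.1 <| by rw [rotate_rotate, Nat.sub_add_cancel hlt.le, h]).symm
  exact hne (hl.eq_replicate_of_rotate_eq_self (by omega) (by simp at hm; omega) hperiod)

end List

theorem sortedDesc_sortedGE (s : Multiset ℕ) : (sortedDesc s).SortedGE :=
  List.sortedGE_reverse.2 (List.sortedLE_iff_pairwise.2 (Multiset.pairwise_sort _ _))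

theorem coe_sortedDesc (s : Multiset ℕ) : (sortedDesc s : Multiset ℕ) = s := by
  rw [sortedDesc, Multiset.coe_reverse, Multiset.sort_eq]

theorem dominoW_singleton (n : ℕ) (ty : Multiset ℕ) :
    dominoW {n} ty = ∑ c : Composition n with (c.blocks : Multiset ℕ) = ty, c.blocks.headI := by
  have hrow : sortedDesc ({n} : Multiset ℕ) = [n] := by simp [sortedDesc]
  unfold dominoW
  generalize sortedDesc ({n} : Multiset ℕ) = l at hrow
  subst hrow
  rw [Finset.sum_filter, Finset.sum_filter]
  exact Fintype.sum_equiv (Equiv.piUnique fun i : Fin 1 => Composition ([n].get i)) _ _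
    fun T => by simp

theorem sum_headI_le_dominoW_singleton {ι : Type*} [Fintype ι] {n : ℕ} {ty : Multiset ℕ}
    (T : ι → Composition n) (hT : Function.Injective T)
    (htype : ∀ i, ((T i).blocks : Multiset ℕ) = ty) :
    ∑ i, (T i).blocks.headI ≤ dominoW {n} ty := by
  classical
  rw [dominoW_singleton]
  refine (Finset.sum_map Finset.univ ⟨T, hT⟩ fun c => c.blocks.headI).symm.trans_le <|
    Finset.sum_le_sum_of_subset fun c hc => ?_
  obtain ⟨i, -, rfl⟩ := Finset.mem_map.1 hc
  exact Finset.mem_filter.2 ⟨Finset.mem_univ _, htype i⟩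

namespace Nat.Partition

variable {n : ℕ}

def rotatedComposition (lam : n.Partition) (k : ℕ) : Composition n where
  blocks := (sortedDesc lam.parts).rotate k
  blocks_pos hi := lam.parts_pos <| by
    rw [← coe_sortedDesc lam.parts]
    exact Multiset.mem_coe.2 (List.mem_rotate.1 hi)
  blocks_sum := by
    rw [(List.rotate_perm _ k).sum_eq, ← Multiset.sum_coe, coe_sortedDesc, lam.parts_sum]

theorem coe_rotatedComposition_blocks (lam : n.Partition) (k : ℕ) :
    ((lam.rotatedComposition k).blocks : Multiset ℕ) = lam.parts := by
  rw [rotatedComposition, Multiset.coe_eq_coe.2 (List.rotate_perm _ k), coe_sortedDesc]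

theorem sortedDesc_ne_replicate (lam : n.Partition)
    (hrect : ¬∃ a b : ℕ, 0 < a ∧ 0 < b ∧ lam.parts = Multiset.replicate b a)
    (hn : 0 < n) :
    ¬∃ a, sortedDesc lam.parts = List.replicate (sortedDesc lam.parts).length a := by
  rintro ⟨a, ha⟩
  have hlen : 0 < (sortedDesc lam.parts).length := by
    rw [← Multiset.coe_card, coe_sortedDesc, Multiset.card_pos]
    exact fun h => hn.ne (by simpa [h] using lam.parts_sum)
  have hparts := coe_sortedDesc lam.parts
  rw [ha, Multiset.coe_replicate] at hparts
  refine hrect ⟨a, _, lam.parts_pos ?_, hlen, hparts.symm⟩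
  rw [← hparts]
  exact Multiset.mem_replicate.2 ⟨hlen.ne', rfl⟩

end Nat.Partition

/-- If `λ ⊢ n` is not rectangular (not of the form `(a^b)`), then the
weighted count of domino tabloids of shape `(n)` and type `λ` is at least `n`. -/
theorem stmt7 {n : ℕ} (lam : Nat.Partition n)
    (hrect : ¬∃ a b : ℕ, 0 < a ∧ 0 < b ∧ lam.parts = Multiset.replicate b a) :
    n ≤ dominoW {n} lam.parts := by
  rcases Nat.eq_zero_or_pos n with rfl | hn
  · exact Nat.zero_le _
  set L := sortedDesc lam.parts
  have hinj : Function.Injective fun k : Fin L.length => lam.rotatedComposition k := by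
    intro k m h
    exact Fin.ext <| (sortedDesc_sortedGE _).injOn_rotate (lam.sortedDesc_ne_replicate hrect hn)
      k.isLt m.isLt (congrArg Composition.blocks h)
  calc n = ∑ k : Fin L.length, L[(k : ℕ)] := by
        rw [← List.sum_ofFn, List.ofFn_getElem, ← Multiset.sum_coe, coe_sortedDesc,
          lam.parts_sum]
    _ = ∑ k : Fin L.length, (lam.rotatedComposition k).blocks.headI :=
        Finset.sum_congr rfl fun k _ => (List.headI_rotate k.isLt).symm
    _ ≤ dominoW {n} lam.parts :=
        sum_headI_le_dominoW_singleton _ hinj fun k => lam.coe_rotatedComposition_blocks k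
end
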